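/- arXiv:2512.12390 — 5 statements merged into one kernel-verified Lean document; each statement's English description precedes it below -/
import Mathlib

section
/- Let 0 < c < √2. Then there is a constant δ_c > 0 (one may take δ_c = (1 - c⁴/4)/10) such that for all f ∈ H²(ℝ), ∫_ℝ (f''(x))² - c²(f'(x))² + f(x)² dx ≥ δ_c ‖f‖²_{H²}. -/
/-!
Integrating by parts, `∫ f'² = -∫ f f'' ≤ (‖f‖² + ‖f''‖²) / 2`. Hence the functional is at
least `(1 - c²/2) (‖f‖² + ‖f''‖²)`, while `‖f‖²_{H²} ≤ (3/2) (‖f‖² + ‖f''‖²)`; the constant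
`δ_c = (1 - c²/2)(1 + c²/2)/10` is small enough since `c² < 2`.
-/

open MeasureTheory

theorem MeasureTheory.Integrable.mul_of_integrable_sq {α : Type*} [MeasurableSpace α]
    {μ : Measure α} {f g : α → ℝ} (hf : AEStronglyMeasurable f μ) (hg : AEStronglyMeasurable g μ)
    (hf2 : Integrable (fun x => f x ^ 2) μ) (hg2 : Integrable (fun x => g x ^ 2) μ) :
    Integrable (fun x => f x * g x) μ :=
  ((memLp_two_iff_integrable_sq hf).2 hf2).integrable_mul ((memLp_two_iff_integrable_sq hg).2 hg2)

theorem integral_deriv_sq_eq_neg_integral_mul_deriv_deriv {f : ℝ → ℝ}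
    (hf : Differentiable ℝ f) (hf' : Differentiable ℝ (deriv f))
    (hf2 : Integrable (fun x => f x ^ 2)) (hf'2 : Integrable (fun x => deriv f x ^ 2))
    (hf''2 : Integrable (fun x => deriv (deriv f) x ^ 2)) :
    ∫ x, deriv f x ^ 2 = -∫ x, f x * deriv (deriv f) x := by
  have hm : AEStronglyMeasurable f := hf.continuous.aestronglyMeasurable
  have hm' : AEStronglyMeasurable (deriv f) := (measurable_deriv f).aestronglyMeasurable
  have hm'' : AEStronglyMeasurable (deriv (deriv f)) :=
    (measurable_deriv _).aestronglyMeasurable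
  have hparts := integral_mul_deriv_eq_deriv_mul_of_integrable
    (fun x _ => (hf x).hasDerivAt) (fun x _ => (hf' x).hasDerivAt)
    (Integrable.mul_of_integrable_sq hm hm'' hf2 hf''2)
    (Integrable.mul_of_integrable_sq hm' hm' hf'2 hf'2)
    (Integrable.mul_of_integrable_sq hm hm' hf2 hf'2)
  simp only [← sq] at hparts
  linarith

theorem integral_deriv_sq_le {f : ℝ → ℝ}
    (hf : Differentiable ℝ f) (hf' : Differentiable ℝ (deriv f))
    (hf2 : Integrable (fun x => f x ^ 2)) (hf'2 : Integrable (fun x => deriv f x ^ 2))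
    (hf''2 : Integrable (fun x => deriv (deriv f) x ^ 2)) :
    ∫ x, deriv f x ^ 2 ≤ ((∫ x, f x ^ 2) + ∫ x, deriv (deriv f) x ^ 2) / 2 := by
  have hprod : Integrable (fun x => f x * deriv (deriv f) x) :=
    .mul_of_integrable_sq hf.continuous.aestronglyMeasurable
      (measurable_deriv _).aestronglyMeasurable hf2 hf''2
  calc ∫ x, deriv f x ^ 2
      = ∫ x, -(f x * deriv (deriv f) x) := by
        rw [integral_neg, integral_deriv_sq_eq_neg_integral_mul_deriv_deriv hf hf' hf2 hf'2 hf''2]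
    _ ≤ ∫ x, (f x ^ 2 + deriv (deriv f) x ^ 2) / 2 :=
        integral_mono hprod.neg ((hf2.add hf''2).div_const 2) fun x => by
          nlinarith [sq_nonneg (f x + deriv (deriv f) x)]
    _ = ((∫ x, f x ^ 2) + ∫ x, deriv (deriv f) x ^ 2) / 2 := by
        rw [integral_div, integral_add hf2 hf''2]

/-- Coercivity of the constraint functional `L` on H²(ℝ) for wavespeeds `0 < c < √2`:
    one may take `δ_c = (1 - c⁴/4)/10`. H² membership is expressed by twice continuous
    differentiability together with square integrability of `f`, `f'`, `f''`. -/
theorem stmt_3 (c : ℝ) (hc0 : 0 < c) (hc : c < Real.sqrt 2) :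
    ∃ δc > 0, ∀ f : ℝ → ℝ, ContDiff ℝ 2 f →
      Integrable (fun x => (f x) ^ 2) → Integrable (fun x => (deriv f x) ^ 2) →
      Integrable (fun x => (deriv (deriv f) x) ^ 2) →
      (∫ x : ℝ, ((deriv (deriv f) x) ^ 2 - c ^ 2 * (deriv f x) ^ 2 + (f x) ^ 2)) ≥
        δc * ((∫ x : ℝ, (f x) ^ 2) + (∫ x : ℝ, (deriv f x) ^ 2) +
          (∫ x : ℝ, (deriv (deriv f) x) ^ 2)) := by
  have hc2 : c ^ 2 < 2 := (Real.lt_sqrt hc0.le).1 hc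
  refine ⟨(1 - c ^ 4 / 4) / 10, by nlinarith, fun f hf hf2 hf'2 hf''2 => ?_⟩
  have hA := integral_deriv_sq_le (hf.differentiable two_ne_zero) hf.differentiable_deriv_two
    hf2 hf'2 hf''2
  have hB : 0 ≤ ∫ x, f x ^ 2 := integral_nonneg fun x => sq_nonneg _
  have hC : 0 ≤ ∫ x, deriv (deriv f) x ^ 2 := integral_nonneg fun x => sq_nonneg _
  have hsplit : ∫ x, (deriv (deriv f) x ^ 2 - c ^ 2 * deriv f x ^ 2 + f x ^ 2) =
      (∫ x, deriv (deriv f) x ^ 2) - c ^ 2 * (∫ x, deriv f x ^ 2) + ∫ x, f x ^ 2 := by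
    have hdiff : Integrable fun x => deriv (deriv f) x ^ 2 - c ^ 2 * deriv f x ^ 2 :=
      hf''2.sub (hf'2.const_mul _)
    rw [integral_add hdiff hf2, integral_sub hf''2 (hf'2.const_mul _),
      integral_const_mul]
  rw [hsplit, ge_iff_le]
  have hδ : 0 ≤ (1 - c ^ 4 / 4) / 10 := by nlinarith
  have hmargin : 0 ≤ ((∫ x, f x ^ 2) + ∫ x, deriv (deriv f) x ^ 2) *
      ((1 - c ^ 2 / 2) - 3 / 2 * ((1 - c ^ 4 / 4) / 10)) :=
    mul_nonneg (by linarith) (by nlinarith)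
  nlinarith [mul_le_mul_of_nonneg_left hA (sq_nonneg c), mul_le_mul_of_nonneg_left hA hδ]
end

section
/- For every p with 2 < p < ∞ there exists C_p > 0 such that for all f ∈ H²(ℝ), ‖f‖_{L^p(ℝ)}^p ≤ C_p ‖f''‖_{L²}^{(p/4 - 1/2)} ‖f‖_{L²}^{(3p/4 + 1/2)}. -/
/-!
Integrating `(f²)' = 2 f f'` from `-∞` and applying Cauchy–Schwarz gives Agmon's inequality
`‖f‖∞² ≤ 2 ‖f‖₂ ‖f'‖₂`, hence `∫ |f|^p ≤ ‖f‖∞^(p-2) ‖f‖₂²`. Integration by parts and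
Cauchy–Schwarz again give `‖f'‖₂² = -∫ f f'' ≤ ‖f‖₂ ‖f''‖₂`; substituting this into Agmon's bound
produces the exponents `p/4 - 1/2` and `3p/4 + 1/2`, with `C_p = 2^((p-2)/2)`.
-/

open MeasureTheory Real

theorem abs_rpow_le_rpow_mul_sq {p y K : ℝ} (hp : 2 ≤ p) (hy : y ^ 2 ≤ K) :
    |y| ^ p ≤ K ^ ((p - 2) / 2) * y ^ 2 := by
  have hsplit : |y| ^ p = (|y| ^ (2 : ℝ)) ^ ((p - 2) / 2) * |y| ^ (2 : ℝ) := by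
    rw [← rpow_mul (abs_nonneg y), ← rpow_add' (abs_nonneg y) (by linarith)]
    ring_nf
  rw [hsplit, rpow_two, sq_abs]
  gcongr

section Integral

variable {α : Type*} [MeasurableSpace α] {μ : Measure α} {u v : α → ℝ}

theorem integral_abs_mul_abs_le_sqrt_mul_sqrt (hu : MemLp u 2 μ) (hv : MemLp v 2 μ) :
    ∫ x, |u x| * |v x| ∂μ ≤ √(∫ x, u x ^ 2 ∂μ) * √(∫ x, v x ^ 2 ∂μ) := by
  have h2 : ENNReal.ofReal 2 = 2 := by norm_num
  have := integral_mul_le_Lp_mul_Lq_of_nonneg Real.HolderConjugate.two_two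
    (Filter.Eventually.of_forall fun x => abs_nonneg (u x))
    (Filter.Eventually.of_forall fun x => abs_nonneg (v x))
    (h2 ▸ hu.abs) (h2 ▸ hv.abs)
  simpa only [rpow_two, sq_abs, ← sqrt_eq_rpow] using this

theorem integral_abs_rpow_le_of_sq_le {p K : ℝ} (hp : 2 ≤ p)
    (hu : Integrable (fun x => u x ^ 2) μ) (hK : ∀ x, u x ^ 2 ≤ K) :
    ∫ x, |u x| ^ p ∂μ ≤ K ^ ((p - 2) / 2) * ∫ x, u x ^ 2 ∂μ := by
  rw [← integral_const_mul]
  exact integral_mono_of_nonneg (.of_forall fun x => by positivity) (hu.const_mul _)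
    (.of_forall fun x => abs_rpow_le_rpow_mul_sq hp (hK x))

end Integral

section Calculus

variable {u : ℝ → ℝ}

theorem sq_le_two_mul_sqrt_integral_sq_mul_sqrt_integral_deriv_sq (hu : Differentiable ℝ u)
    (hu2 : MemLp u 2) (hu'2 : MemLp (deriv u) 2) (x : ℝ) :
    u x ^ 2 ≤ 2 * √(∫ t, u t ^ 2) * √(∫ t, deriv u t ^ 2) := by
  have hderiv : ∀ t, HasDerivAt (fun s => u s ^ 2) (2 * (u t * deriv u t)) t := fun t =>
    ((hu t).hasDerivAt.fun_pow 2).congr_deriv (by norm_num; ring)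
  have hint : Integrable (fun t => 2 * (u t * deriv u t)) :=
    (hu2.integrable_mul hu'2).const_mul 2
  have hlim : Filter.Tendsto (fun t => u t ^ 2) Filter.atBot (nhds 0) :=
    tendsto_zero_of_hasDerivAt_of_integrableOn_Iic (a := 0)
      (fun t _ => hderiv t) hint.integrableOn hu2.integrable_sq.integrableOn
  have hftc : ∫ t in Set.Iic x, 2 * (u t * deriv u t) = u x ^ 2 - 0 :=
    integral_Iic_of_hasDerivAt_of_tendsto' (fun t _ => hderiv t) hint.integrableOn hlim
  have habs : Integrable (fun t => 2 * (|u t| * |deriv u t|)) := by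
    simpa only [Pi.mul_apply, abs_mul] using (hu2.integrable_mul hu'2).abs.const_mul 2
  calc u x ^ 2 = ∫ t in Set.Iic x, 2 * (u t * deriv u t) := by rw [hftc, sub_zero]
    _ ≤ ∫ t in Set.Iic x, 2 * (|u t| * |deriv u t|) :=
        setIntegral_mono hint.integrableOn habs.integrableOn fun t => by
          rw [← abs_mul]; gcongr; exact le_abs_self _
    _ ≤ ∫ t, 2 * (|u t| * |deriv u t|) :=
        setIntegral_le_integral habs (.of_forall fun t => by positivity)
    _ ≤ 2 * (√(∫ t, u t ^ 2) * √(∫ t, deriv u t ^ 2)) := by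
        rw [integral_const_mul]
        gcongr
        exact integral_abs_mul_abs_le_sqrt_mul_sqrt hu2 hu'2
    _ = _ := by ring

theorem integral_deriv_sq_eq_neg_integral_mul_deriv_deriv_s5 (hu : Differentiable ℝ u)
    (hu' : Differentiable ℝ (deriv u)) (hu2 : MemLp u 2)
    (hu'2 : MemLp (deriv u) 2) (hu''2 : MemLp (deriv (deriv u)) 2) :
    ∫ t, deriv u t ^ 2 = -∫ t, u t * deriv (deriv u) t := by
  rw [integral_mul_deriv_eq_deriv_mul_of_integrable (fun t _ => (hu t).hasDerivAt)
    (fun t _ => (hu' t).hasDerivAt) (hu2.integrable_mul hu''2) (hu'2.integrable_mul hu'2)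
    (hu2.integrable_mul hu'2), neg_neg]
  simp only [sq]

theorem integral_deriv_sq_le_sqrt_mul_sqrt (hu : Differentiable ℝ u)
    (hu' : Differentiable ℝ (deriv u)) (hu2 : MemLp u 2)
    (hu'2 : MemLp (deriv u) 2) (hu''2 : MemLp (deriv (deriv u)) 2) :
    ∫ t, deriv u t ^ 2 ≤ √(∫ t, u t ^ 2) * √(∫ t, deriv (deriv u) t ^ 2) :=
  calc ∫ t, deriv u t ^ 2 = -∫ t, u t * deriv (deriv u) t :=
        integral_deriv_sq_eq_neg_integral_mul_deriv_deriv_s5 hu hu' hu2 hu'2 hu''2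
    _ ≤ ∫ t, |u t| * |deriv (deriv u) t| := by
        refine (neg_le_abs _).trans ?_
        simpa only [Real.norm_eq_abs, abs_mul] using
          norm_integral_le_integral_norm fun t => u t * deriv (deriv u) t
    _ ≤ _ := integral_abs_mul_abs_le_sqrt_mul_sqrt hu2 hu''2

end Calculus

theorem two_mul_mul_rpow_mul_sq_le {p a b d : ℝ} (hp : 2 ≤ p) (ha : 0 ≤ a) (hb : 0 ≤ b)
    (hd : 0 ≤ d) (hbad : b ^ 2 ≤ a * d) :
    (2 * a * b) ^ ((p - 2) / 2) * a ^ 2 ≤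
      2 ^ ((p - 2) / 2) * d ^ (p / 4 - 1 / 2) * a ^ (3 * p / 4 + 1 / 2) := by
  have hq : 0 ≤ p / 4 - 1 / 2 := by linarith
  have hab : (a * b) ^ ((p - 2) / 2) ≤ a ^ (3 * p / 4 - 3 / 2) * d ^ (p / 4 - 1 / 2) :=
    calc (a * b) ^ ((p - 2) / 2) = ((a * b) ^ (2 : ℝ)) ^ (p / 4 - 1 / 2) := by
          rw [← rpow_mul (by positivity)]; ring_nf
      _ ≤ (a ^ (3 : ℝ) * d) ^ (p / 4 - 1 / 2) := by
          gcongr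
          rw [mul_rpow ha hb, rpow_ofNat, rpow_ofNat, rpow_ofNat]
          nlinarith [mul_le_mul_of_nonneg_left hbad (sq_nonneg a)]
      _ = a ^ (3 * p / 4 - 3 / 2) * d ^ (p / 4 - 1 / 2) := by
          rw [mul_rpow (by positivity) hd, ← rpow_mul ha]; ring_nf
  calc (2 * a * b) ^ ((p - 2) / 2) * a ^ 2
      = 2 ^ ((p - 2) / 2) * (a * b) ^ ((p - 2) / 2) * a ^ (2 : ℝ) := by
        rw [mul_assoc, mul_rpow zero_le_two (by positivity), rpow_two]
    _ ≤ 2 ^ ((p - 2) / 2) * (a ^ (3 * p / 4 - 3 / 2) * d ^ (p / 4 - 1 / 2)) * a ^ (2 : ℝ) := by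
        gcongr
    _ = 2 ^ ((p - 2) / 2) * d ^ (p / 4 - 1 / 2) * a ^ (3 * p / 4 + 1 / 2) := by
        have hexp : a ^ (3 * p / 4 - 3 / 2) * a ^ (2 : ℝ) = a ^ (3 * p / 4 + 1 / 2) := by
          rw [← rpow_add' ha (by linarith)]; ring_nf
        rw [← hexp]; ring

/-- Gagliardo–Nirenberg inequality on H²(ℝ):
    `‖f‖_{L^p}^p ≤ C_p ‖f''‖_{L²}^{p/4 - 1/2} ‖f‖_{L²}^{3p/4 + 1/2}` for `2 < p < ∞`. -/
theorem stmt_5 (p : ℝ) (hp : 2 < p) :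
    ∃ C > 0, ∀ f : ℝ → ℝ, ContDiff ℝ 2 f →
      Integrable (fun x => (f x) ^ 2) → Integrable (fun x => (deriv f x) ^ 2) →
      Integrable (fun x => (deriv (deriv f) x) ^ 2) →
      (∫ x : ℝ, |f x| ^ p) ≤
        C * ((∫ x : ℝ, (deriv (deriv f) x) ^ 2) ^ ((1 : ℝ) / 2)) ^ (p / 4 - 1 / 2) *
          ((∫ x : ℝ, (f x) ^ 2) ^ ((1 : ℝ) / 2)) ^ (3 * p / 4 + 1 / 2) := by
  refine ⟨2 ^ ((p - 2) / 2), by positivity, fun f hf h0 h1 h2 => ?_⟩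
  have hdf : Differentiable ℝ f := hf.differentiable two_ne_zero
  have hdf' : Differentiable ℝ (deriv f) := (hf.iterate_deriv' 1 1).differentiable one_ne_zero
  have hf2 : MemLp f 2 :=
    (memLp_two_iff_integrable_sq hdf.continuous.aestronglyMeasurable).2 h0
  have hf'2 : MemLp (deriv f) 2 :=
    (memLp_two_iff_integrable_sq hdf'.continuous.aestronglyMeasurable).2 h1
  have hf''2 : MemLp (deriv (deriv f)) 2 :=
    (memLp_two_iff_integrable_sq (measurable_deriv _).aestronglyMeasurable).2 h2
  have hinterp : √(∫ x, deriv f x ^ 2) ^ 2 ≤ √(∫ x, f x ^ 2) * √(∫ x, deriv (deriv f) x ^ 2) := by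
    rw [sq_sqrt (integral_nonneg fun x => sq_nonneg _)]
    exact integral_deriv_sq_le_sqrt_mul_sqrt hdf hdf' hf2 hf'2 hf''2
  simp only [← sqrt_eq_rpow]
  calc ∫ x, |f x| ^ p
      ≤ (2 * √(∫ x, f x ^ 2) * √(∫ x, deriv f x ^ 2)) ^ ((p - 2) / 2) * ∫ x, f x ^ 2 :=
        integral_abs_rpow_le_of_sq_le hp.le h0
          (sq_le_two_mul_sqrt_integral_sq_mul_sqrt_integral_deriv_sq hdf hf2 hf'2)
    _ = (2 * √(∫ x, f x ^ 2) * √(∫ x, deriv f x ^ 2)) ^ ((p - 2) / 2) * √(∫ x, f x ^ 2) ^ 2 := by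
        rw [sq_sqrt (integral_nonneg fun x => sq_nonneg _)]
    _ ≤ _ := two_mul_mul_rpow_mul_sq_le hp.le (sqrt_nonneg _) (sqrt_nonneg _) (sqrt_nonneg _)
        hinterp
end

section
/- Let λ > 0 and define M_λ = sup { I[φ] : φ ∈ H²(ℝ), L[φ] = λ }, where L[φ] = ∫ (φ'')² - c²(φ')² + φ² dx with 0 < c < √2 and I[φ] = ∫ G(φ²) dx with G as above. If M_λ > 0 for all λ > 0, then for every λ > 0 and α ∈ (0, λ): M_λ > M_α + M_{λ-α} (strict superadditivity). -/
open MeasureTheory Real Finset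

/-!
Scaling `φ ↦ √s φ` (`s ≥ 1`) multiplies `L` by `s` and, since every monomial of `G(r)` has
degree at least `2`, multiplies `I` by at least `s²`. Hence `M_ν ≥ (ν/μ)² M_μ` for `μ ≤ ν`, i.e.
`λ² M_α ≤ α² M_λ`, and
`λ² (M_α + M_{λ-α}) ≤ (α² + (λ-α)²) M_λ = (λ² - 2α(λ-α)) M_λ < λ² M_λ` because `M_λ > 0`.
-/

section PolynomialScaling

variable {N : ℕ} {b : ℕ → ℝ}

lemma sum_Icc_mul_pow_nonneg (hb : ∀ k, 0 ≤ b k) {r : ℝ} (hr : 0 ≤ r) :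
    0 ≤ ∑ k ∈ Icc 1 N, b k * r ^ (k + 1) :=
  sum_nonneg fun k _ => mul_nonneg (hb k) (pow_nonneg hr _)

lemma sq_mul_sum_Icc_le_sum_Icc_mul_pow (hb : ∀ k, 0 ≤ b k) {s r : ℝ} (hs : 1 ≤ s)
    (hr : 0 ≤ r) :
    s ^ 2 * ∑ k ∈ Icc 1 N, b k * r ^ (k + 1) ≤ ∑ k ∈ Icc 1 N, b k * (s * r) ^ (k + 1) := by
  rw [mul_sum]
  refine sum_le_sum fun k hk => ?_
  have hs_pow : s ^ 2 ≤ s ^ (k + 1) := pow_le_pow_right₀ hs (by simp at hk; omega)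
  calc s ^ 2 * (b k * r ^ (k + 1)) = b k * (s ^ 2 * r ^ (k + 1)) := by ring
    _ ≤ b k * (s ^ (k + 1) * r ^ (k + 1)) := by gcongr; exact hb k
    _ = b k * (s * r) ^ (k + 1) := by rw [mul_pow]

lemma sum_Icc_mul_pow_le_pow_mul_sum_Icc (hb : ∀ k, 0 ≤ b k) {s r : ℝ} (hs : 1 ≤ s)
    (hr : 0 ≤ r) :
    ∑ k ∈ Icc 1 N, b k * (s * r) ^ (k + 1) ≤ s ^ (N + 1) * ∑ k ∈ Icc 1 N, b k * r ^ (k + 1) := by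
  rw [mul_sum]
  refine sum_le_sum fun k hk => ?_
  have hs_pow : s ^ (k + 1) ≤ s ^ (N + 1) := pow_le_pow_right₀ hs (by simp at hk; omega)
  calc b k * (s * r) ^ (k + 1) = b k * (s ^ (k + 1) * r ^ (k + 1)) := by rw [mul_pow]
    _ ≤ b k * (s ^ (N + 1) * r ^ (k + 1)) := by gcongr; exact hb k
    _ = s ^ (N + 1) * (b k * r ^ (k + 1)) := by ring

end PolynomialScaling

lemma const_mul_integral_le_integral_of_le_of_le_const_mul {α : Type*} [MeasurableSpace α]
    {μ : Measure α} {f g : α → ℝ} {c C : ℝ} (hc : 0 ≤ c) (hf : 0 ≤ f)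
    (hg : AEStronglyMeasurable g μ) (hfg : ∀ x, c * f x ≤ g x) (hgf : ∀ x, g x ≤ C * f x) :
    c * ∫ x, f x ∂μ ≤ ∫ x, g x ∂μ := by
  have hg0 : ∀ x, 0 ≤ g x := fun x => (mul_nonneg hc (hf x)).trans (hfg x)
  by_cases hfi : Integrable f μ
  · have hgi : Integrable g μ :=
      (hfi.const_mul C).mono' hg (Filter.Eventually.of_forall fun x => by
        rw [Real.norm_eq_abs, abs_of_nonneg (hg0 x)]; exact hgf x)
    rw [← integral_const_mul]
    exact integral_mono (hfi.const_mul c) hgi hfg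
  · rw [integral_undef hfi, mul_zero]
    exact integral_nonneg hg0

lemma sq_mul_integral_le_integral_comp_const_mul {α : Type*} [MeasurableSpace α]
    {μ : Measure α} {N : ℕ} {b : ℕ → ℝ} (hb : ∀ k, 0 ≤ b k) {G : ℝ → ℝ}
    (hG : ∀ r, G r = ∑ k ∈ Icc 1 N, b k * r ^ (k + 1)) {f : α → ℝ}
    (hf : AEStronglyMeasurable f μ) (hf0 : 0 ≤ f) {s : ℝ} (hs : 1 ≤ s) :
    s ^ 2 * ∫ x, G (f x) ∂μ ≤ ∫ x, G (s * f x) ∂μ := by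
  have hG_cont : Continuous G := by
    rw [show G = fun r => ∑ k ∈ Icc 1 N, b k * r ^ (k + 1) from funext hG]
    fun_prop
  refine const_mul_integral_le_integral_of_le_of_le_const_mul (C := s ^ (N + 1)) (by positivity)
    (fun x => (hG _).symm ▸ sum_Icc_mul_pow_nonneg hb (hf0 x))
    (hG_cont.comp_aestronglyMeasurable (hf.const_mul s)) (fun x => ?_) (fun x => ?_)
  · simpa only [hG] using sq_mul_sum_Icc_le_sum_Icc_mul_pow hb hs (hf0 x)
  · simpa only [hG] using sum_Icc_mul_pow_le_pow_mul_sum_Icc hb hs (hf0 x)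

def MemH2 (φ : ℝ → ℝ) : Prop :=
  ContDiff ℝ 2 φ ∧ Integrable (fun x => (φ x) ^ 2) ∧
    Integrable (fun x => (deriv φ x) ^ 2) ∧ Integrable (fun x => (deriv (deriv φ) x) ^ 2)

lemma MemH2.const_mul {φ : ℝ → ℝ} (hφ : MemH2 φ) (β : ℝ) : MemH2 (fun x => β * φ x) := by
  obtain ⟨hφ_smooth, h0, h1, h2⟩ := hφ
  refine ⟨contDiff_const.mul hφ_smooth, ?_, ?_, ?_⟩ <;>
    simp only [deriv_const_mul_field', mul_pow] <;>
    apply Integrable.const_mul <;> assumption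

lemma integral_energy_const_mul (c β : ℝ) (φ : ℝ → ℝ) :
    ∫ x, ((deriv (deriv fun y => β * φ y) x) ^ 2 - c ^ 2 * (deriv (fun y => β * φ y) x) ^ 2
      + (β * φ x) ^ 2) =
    β ^ 2 * ∫ x, ((deriv (deriv φ) x) ^ 2 - c ^ 2 * (deriv φ x) ^ 2 + (φ x) ^ 2) := by
  rw [← integral_const_mul]
  simp only [deriv_const_mul_field']
  congr 1 with x
  ring

lemma mul_csSup_le_csSup {A B : Set ℝ} {t : ℝ} (ht : 0 < t) (hA : A.Nonempty)
    (hB : BddAbove B) (h : ∀ a ∈ A, ∃ b ∈ B, t * a ≤ b) : t * sSup A ≤ sSup B := by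
  rw [mul_comm, ← le_div_iff₀ ht]
  refine csSup_le hA fun a ha => ?_
  obtain ⟨b, hb, hab⟩ := h a ha
  rw [le_div_iff₀ ht, mul_comm]
  exact hab.trans (le_csSup hB hb)

section LevelSupremum

variable {X : Type*} {P : X → Prop} {L I : X → ℝ}

lemma sq_mul_sSup_level_le_of_scaling
    (hscale : ∀ x, P x → ∀ s : ℝ, 1 ≤ s → ∃ y, P y ∧ L y = s * L x ∧ s ^ 2 * I x ≤ I y)
    {μ ν : ℝ} (hμ : 0 < μ) (hμν : μ ≤ ν) (hne : (I '' {x | P x ∧ L x = μ}).Nonempty)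
    (hbdd : BddAbove (I '' {x | P x ∧ L x = ν})) :
    ν ^ 2 * sSup (I '' {x | P x ∧ L x = μ}) ≤ μ ^ 2 * sSup (I '' {x | P x ∧ L x = ν}) := by
  have hratio : (ν / μ) ^ 2 * sSup (I '' {x | P x ∧ L x = μ}) ≤
      sSup (I '' {x | P x ∧ L x = ν}) := by
    refine mul_csSup_le_csSup (pow_pos (div_pos (hμ.trans_le hμν) hμ) 2) hne hbdd ?_
    rintro _ ⟨x, ⟨hx, hLx⟩, rfl⟩
    obtain ⟨y, hy, hLy, hIy⟩ := hscale x hx (ν / μ) ((one_le_div hμ).mpr hμν)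
    exact ⟨I y, ⟨y, ⟨hy, by rw [hLy, hLx, div_mul_cancel₀ _ hμ.ne']⟩, rfl⟩, hIy⟩
  rw [div_pow, div_mul_eq_mul_div, div_le_iff₀ (by positivity)] at hratio
  linarith

theorem sSup_level_add_lt_of_scaling
    (hscale : ∀ x, P x → ∀ s : ℝ, 1 ≤ s → ∃ y, P y ∧ L y = s * L x ∧ s ^ 2 * I x ≤ I y)
    (M : ℝ → ℝ) (hM : ∀ lam, M lam = sSup (I '' {x | P x ∧ L x = lam}))
    (hMpos : ∀ lam > 0, 0 < M lam)
    (hMfin : ∀ lam > 0, BddAbove (I '' {x | P x ∧ L x = lam}))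
    {lam α : ℝ} (hα : 0 < α) (hαlam : α < lam) :
    M α + M (lam - α) < M lam := by
  have hlam : 0 < lam := hα.trans hαlam
  have hβ : 0 < lam - α := sub_pos.mpr hαlam
  have level_le : ∀ μ, 0 < μ → μ ≤ lam → lam ^ 2 * M μ ≤ μ ^ 2 * M lam := fun μ hμ hμlam => by
    have hne : (I '' {x | P x ∧ L x = μ}).Nonempty := by
      by_contra h
      have := hMpos μ hμ
      rw [hM, Set.not_nonempty_iff_eq_empty.mp h, Real.sSup_empty] at this
      exact lt_irrefl 0 this
    simpa only [hM] using sq_mul_sSup_level_le_of_scaling hscale hμ hμlam hne (hMfin lam hlam)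
  have h1 := level_le α hα hαlam.le
  have h2 := level_le (lam - α) hβ (by linarith)
  nlinarith [mul_pos (mul_pos hα hβ) (hMpos lam hlam)]

end LevelSupremum

theorem stmt_7_general (c : ℝ)
    (N : ℕ) (a : ℕ → ℝ) (ha : ∀ k, 0 ≤ a k)
    (G : ℝ → ℝ) (hG : ∀ r, G r = ∑ k ∈ Finset.Icc 1 N, a k / (k + 1) * r ^ (k + 1))
    (H2 : (ℝ → ℝ) → Prop)
    (hH2 : ∀ φ, H2 φ ↔ ContDiff ℝ 2 φ ∧ Integrable (fun x => (φ x) ^ 2) ∧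
      Integrable (fun x => (deriv φ x) ^ 2) ∧
      Integrable (fun x => (deriv (deriv φ) x) ^ 2))
    (L I : (ℝ → ℝ) → ℝ)
    (hL : ∀ φ, L φ = ∫ x : ℝ,
      ((deriv (deriv φ) x) ^ 2 - c ^ 2 * (deriv φ x) ^ 2 + (φ x) ^ 2))
    (hI : ∀ φ, I φ = ∫ x : ℝ, G ((φ x) ^ 2))
    (M : ℝ → ℝ) (hM : ∀ lam, M lam = sSup (I '' {φ | H2 φ ∧ L φ = lam}))
    (hMpos : ∀ lam > 0, 0 < M lam)
    (hMfin : ∀ lam > 0, BddAbove (I '' {φ | H2 φ ∧ L φ = lam})) :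
    ∀ lam > 0, ∀ α, 0 < α → α < lam → M lam > M α + M (lam - α) := by
  have hscale : ∀ φ, H2 φ → ∀ s : ℝ, 1 ≤ s →
      ∃ ψ, H2 ψ ∧ L ψ = s * L φ ∧ s ^ 2 * I φ ≤ I ψ := by
    intro φ hφ s hs
    have hφ' : MemH2 φ := (hH2 φ).mp hφ
    have hsqrt : √s ^ 2 = s := sq_sqrt (by linarith)
    refine ⟨fun x => √s * φ x, (hH2 _).mpr (hφ'.const_mul _), ?_, ?_⟩
    · rw [hL, hL, integral_energy_const_mul, hsqrt]
    · have hb : ∀ k : ℕ, 0 ≤ a k / (k + 1) := fun k => div_nonneg (ha k) (by positivity)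
      have := sq_mul_integral_le_integral_comp_const_mul (μ := volume) (f := fun x => φ x ^ 2) hb hG
        (hφ'.1.continuous.pow 2).aestronglyMeasurable (fun x => sq_nonneg (φ x)) hs
      simpa only [hI, mul_pow, hsqrt] using this
  intro lam _ α hα hαlam
  exact sSup_level_add_lt_of_scaling hscale M hM hMpos hMfin hα hαlam

/-- Strict superadditivity of `λ ↦ M_λ`, where
    `M_λ = sup { I[φ] : φ ∈ H²(ℝ), L[φ] = λ }`,
    `L[φ] = ∫ (φ'')² - c²(φ')² + φ²`, `I[φ] = ∫ G(φ²)`,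
    `G(r) = Σ_{k=1}^N a_k/(k+1) r^{k+1}`, `a_k ≥ 0` not all zero, `0 < c < √2`,
    assuming `M_λ > 0` and finiteness (bounded above) for all `λ > 0`. -/
theorem stmt_7 (c : ℝ) (hc0 : 0 < c) (hc : c < Real.sqrt 2)
    (N : ℕ) (hN : 1 ≤ N) (a : ℕ → ℝ) (ha : ∀ k, 0 ≤ a k)
    (hane : ∃ k ∈ Finset.Icc 1 N, a k ≠ 0)
    (G : ℝ → ℝ) (hG : ∀ r, G r = ∑ k ∈ Finset.Icc 1 N, a k / (k + 1) * r ^ (k + 1))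
    (H2 : (ℝ → ℝ) → Prop)
    (hH2 : ∀ φ, H2 φ ↔ ContDiff ℝ 2 φ ∧ Integrable (fun x => (φ x) ^ 2) ∧
      Integrable (fun x => (deriv φ x) ^ 2) ∧
      Integrable (fun x => (deriv (deriv φ) x) ^ 2))
    (L I : (ℝ → ℝ) → ℝ)
    (hL : ∀ φ, L φ = ∫ x : ℝ,
      ((deriv (deriv φ) x) ^ 2 - c ^ 2 * (deriv φ x) ^ 2 + (φ x) ^ 2))
    (hI : ∀ φ, I φ = ∫ x : ℝ, G ((φ x) ^ 2))
    (M : ℝ → ℝ) (hM : ∀ lam, M lam = sSup (I '' {φ | H2 φ ∧ L φ = lam}))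
    (hMpos : ∀ lam > 0, 0 < M lam)
    (hMfin : ∀ lam > 0, BddAbove (I '' {φ | H2 φ ∧ L φ = lam})) :
    ∀ lam > 0, ∀ α, 0 < α → α < lam → M lam > M α + M (lam - α) :=
  stmt_7_general c N a ha G hG H2 hH2 L I hL hI M hM hMpos hMfin
end

section
/- Let 0 < c < √2. Then M_λ := sup{ I[φ] : φ ∈ H²(ℝ), L[φ] = λ } is finite for every λ > 0; more precisely M_λ ≤ C G(λ) for some constant C depending only on c and the polynomial F. -/
/-!
Integrating by parts, `∫ φ'² = -∫ φ φ'' ≤ (∫ φ''² + ∫ φ²) / 2`, so with `δ = 1 - c² / 2 > 0`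
the quadratic form is coercive: `L[φ] ≥ δ (∫ φ''² + ∫ φ²)`. Writing `φ(x)² = ∫_{-∞}^x 2 φ φ'`
bounds `φ²` pointwise by `∫ φ² + ∫ φ'² ≤ 3/2 (∫ φ''² + ∫ φ²)`. Hence on `{L = λ}` we get
`∫ φ² ≤ λ / δ` and `φ² ≤ K λ` with `K = 3 / (2δ) ≥ 1`. As `G(r) / r` is increasing,
`G(φ²) ≤ φ² G(Kλ) / (Kλ)`, and as `G` has degree at most `N + 1`, `G(Kλ) ≤ K^(N+1) G(λ)`;
together `I[φ] ≤ K^N G(λ) / δ`.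
-/

open MeasureTheory Finset Filter Topology

section PowerSums

variable {s : Finset ℕ} {b : ℕ → ℝ}

theorem sum_mul_pow_succ_le_div_mul (hb : ∀ k ∈ s, 0 ≤ b k) {x t : ℝ} (hx : 0 ≤ x)
    (hxt : x ≤ t) :
    ∑ k ∈ s, b k * x ^ (k + 1) ≤ (∑ k ∈ s, b k * t ^ (k + 1)) / t * x := by
  rcases (hx.trans hxt).eq_or_lt with rfl | ht
  · simp [le_antisymm hxt hx]
  rw [sum_div, sum_mul]
  refine sum_le_sum fun k hk => ?_
  calc b k * x ^ (k + 1) = b k * x ^ k * x := by ring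
    _ ≤ b k * t ^ k * x := by gcongr; exact hb k hk
    _ = b k * t ^ (k + 1) / t * x := by field_simp; ring

theorem sum_mul_pow_succ_mul_le (hb : ∀ k ∈ s, 0 ≤ b k) {n : ℕ} (hn : ∀ k ∈ s, k ≤ n)
    {K t : ℝ} (hK : 1 ≤ K) (ht : 0 ≤ t) :
    ∑ k ∈ s, b k * (K * t) ^ (k + 1) ≤ K ^ (n + 1) * ∑ k ∈ s, b k * t ^ (k + 1) := by
  rw [mul_sum]
  refine sum_le_sum fun k hk => ?_
  have hKk : K ^ (k + 1) ≤ K ^ (n + 1) := pow_le_pow_right₀ hK (by have := hn k hk; omega)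
  have hbt : 0 ≤ b k * t ^ (k + 1) := mul_nonneg (hb k hk) (by positivity)
  calc b k * (K * t) ^ (k + 1) = K ^ (k + 1) * (b k * t ^ (k + 1)) := by ring
    _ ≤ K ^ (n + 1) * (b k * t ^ (k + 1)) := by gcongr

theorem integral_sum_mul_pow_succ_le {α : Type*} [MeasurableSpace α] {μ : Measure α}
    (hb : ∀ k ∈ s, 0 ≤ b k) {n : ℕ} (hn : ∀ k ∈ s, k ≤ n) {f : α → ℝ} (hf0 : ∀ x, 0 ≤ f x)
    (hf : Integrable f μ) {K t : ℝ} (hK : 1 ≤ K) (ht : 0 < t) (hfK : ∀ x, f x ≤ K * t) :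
    ∫ x, ∑ k ∈ s, b k * f x ^ (k + 1) ∂μ ≤
      K ^ n / t * (∫ x, f x ∂μ) * ∑ k ∈ s, b k * t ^ (k + 1) := by
  have hP : ∀ r, 0 ≤ r → 0 ≤ ∑ k ∈ s, b k * r ^ (k + 1) := fun r hr =>
    sum_nonneg fun k hk => mul_nonneg (hb k hk) (by positivity)
  have hKt : 0 < K * t := by positivity
  have hKtP := hP _ hKt.le
  have hint : 0 ≤ ∫ x, f x ∂μ := integral_nonneg hf0
  calc ∫ x, ∑ k ∈ s, b k * f x ^ (k + 1) ∂μ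
        ≤ ∫ x, (∑ k ∈ s, b k * (K * t) ^ (k + 1)) / (K * t) * f x ∂μ :=
          integral_mono_of_nonneg (Eventually.of_forall fun x => hP _ (hf0 x)) (hf.const_mul _)
            (Eventually.of_forall fun x => sum_mul_pow_succ_le_div_mul hb (hf0 x) (hfK x))
    _ = (∑ k ∈ s, b k * (K * t) ^ (k + 1)) / (K * t) * ∫ x, f x ∂μ := integral_const_mul _ _
    _ ≤ K ^ (n + 1) * (∑ k ∈ s, b k * t ^ (k + 1)) / (K * t) * ∫ x, f x ∂μ := by
          gcongr; exact sum_mul_pow_succ_mul_le hb hn hK ht.le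
    _ = K ^ n / t * (∫ x, f x ∂μ) * ∑ k ∈ s, b k * t ^ (k + 1) := by
          field_simp; ring

end PowerSums

theorem integrable_mul_of_integrable_sq {α : Type*} [MeasurableSpace α] {μ : Measure α}
    {f g : α → ℝ} (hf : AEStronglyMeasurable f μ) (hg : AEStronglyMeasurable g μ)
    (hf2 : Integrable (fun x => f x ^ 2) μ) (hg2 : Integrable (fun x => g x ^ 2) μ) :
    Integrable (f * g) μ :=
  ((memLp_two_iff_integrable_sq hf).2 hf2).integrable_mul ((memLp_two_iff_integrable_sq hg).2 hg2)

section SecondOrderSobolev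

variable {φ : ℝ → ℝ}

theorem sq_le_integral_sq_add_integral_deriv_sq (hφ : Differentiable ℝ φ)
    (h0 : Integrable fun x => φ x ^ 2) (h1 : Integrable fun x => deriv φ x ^ 2) (x : ℝ) :
    φ x ^ 2 ≤ (∫ y, φ y ^ 2) + ∫ y, deriv φ y ^ 2 := by
  have hderiv : ∀ y, HasDerivAt (fun z => φ z ^ 2) (2 * (φ y * deriv φ y)) y := fun y =>
    ((hφ y).hasDerivAt.fun_pow 2).congr_deriv (by norm_num; ring)
  have hint : Integrable fun y => 2 * (φ y * deriv φ y) :=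
    (integrable_mul_of_integrable_sq hφ.continuous.aestronglyMeasurable
      (measurable_deriv φ).aestronglyMeasurable h0 h1).const_mul 2
  have hlim : Tendsto (fun y => φ y ^ 2) atBot (𝓝 0) :=
    tendsto_zero_of_hasDerivAt_of_integrableOn_Iic (a := x) (fun y _ => hderiv y)
      hint.integrableOn h0.integrableOn
  calc φ x ^ 2 = ∫ y in Set.Iic x, 2 * (φ y * deriv φ y) := by
        rw [integral_Iic_of_hasDerivAt_of_tendsto' (fun y _ => hderiv y) hint.integrableOn hlim,
          sub_zero]
    _ ≤ ∫ y in Set.Iic x, (φ y ^ 2 + deriv φ y ^ 2) :=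
        setIntegral_mono_on hint.integrableOn (h0.add h1).integrableOn measurableSet_Iic
          fun y _ => by nlinarith [sq_nonneg (φ y - deriv φ y)]
    _ ≤ ∫ y, (φ y ^ 2 + deriv φ y ^ 2) :=
        setIntegral_le_integral (h0.add h1) (Eventually.of_forall fun y => by positivity)
    _ = (∫ y, φ y ^ 2) + ∫ y, deriv φ y ^ 2 := integral_add h0 h1

variable (hφ : Differentiable ℝ φ) (hφ' : Differentiable ℝ (deriv φ))
  (h0 : Integrable fun x => φ x ^ 2) (h1 : Integrable fun x => deriv φ x ^ 2)
  (h2 : Integrable fun x => deriv (deriv φ) x ^ 2)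
include hφ hφ' h0 h1 h2

theorem integral_deriv_sq_eq_neg_integral_mul_deriv_deriv_s9 :
    ∫ x, deriv φ x ^ 2 = -∫ x, φ x * deriv (deriv φ) x := by
  have m0 := hφ.continuous.aestronglyMeasurable (μ := volume)
  have m1 := (measurable_deriv φ).aestronglyMeasurable (μ := volume)
  have m2 := (measurable_deriv (deriv φ)).aestronglyMeasurable (μ := volume)
  have ibp := integral_mul_deriv_eq_deriv_mul_of_integrable (u := φ) (v := deriv φ)
    (fun x _ => (hφ x).hasDerivAt) (fun x _ => (hφ' x).hasDerivAt)
    (integrable_mul_of_integrable_sq m0 m2 h0 h2) (integrable_mul_of_integrable_sq m1 m1 h1 h1)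
    (integrable_mul_of_integrable_sq m0 m1 h0 h1)
  simp only [← sq] at ibp
  linarith

theorem two_mul_integral_deriv_sq_le :
    2 * ∫ x, deriv φ x ^ 2 ≤ (∫ x, deriv (deriv φ) x ^ 2) + ∫ x, φ x ^ 2 := by
  have hint := integrable_mul_of_integrable_sq hφ.continuous.aestronglyMeasurable
    (measurable_deriv (deriv φ)).aestronglyMeasurable h0 h2
  rw [integral_deriv_sq_eq_neg_integral_mul_deriv_deriv_s9 hφ hφ' h0 h1 h2, ← integral_add h2 h0,
    mul_neg, ← integral_const_mul, ← integral_neg]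
  exact integral_mono (hint.const_mul 2).neg (h2.add h0) fun x => by
    nlinarith [sq_nonneg (φ x + deriv (deriv φ) x)]

theorem one_sub_sq_div_two_mul_le_integral (c : ℝ) :
    (1 - c ^ 2 / 2) * ((∫ x, deriv (deriv φ) x ^ 2) + ∫ x, φ x ^ 2) ≤
      ∫ x, (deriv (deriv φ) x ^ 2 - c ^ 2 * deriv φ x ^ 2 + φ x ^ 2) := by
  have h := two_mul_integral_deriv_sq_le hφ hφ' h0 h1 h2
  have hsub : Integrable fun x => deriv (deriv φ) x ^ 2 - c ^ 2 * deriv φ x ^ 2 :=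
    h2.sub (h1.const_mul _)
  rw [integral_add hsub h0, integral_sub h2 (h1.const_mul _), integral_const_mul]
  nlinarith [mul_le_mul_of_nonneg_left h (sq_nonneg c)]

theorem sq_le_three_div_two_mul_integral (x : ℝ) :
    φ x ^ 2 ≤ 3 / 2 * ((∫ x, deriv (deriv φ) x ^ 2) + ∫ x, φ x ^ 2) := by
  have := two_mul_integral_deriv_sq_le hφ hφ' h0 h1 h2
  have := sq_le_integral_sq_add_integral_deriv_sq hφ h0 h1 x
  have : 0 ≤ ∫ x, deriv (deriv φ) x ^ 2 := integral_nonneg fun x => sq_nonneg _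
  linarith

theorem integral_sq_le_div_of_sq_lt_two {c : ℝ} (hc : c ^ 2 < 2) :
    ∫ x, φ x ^ 2 ≤
      (∫ x, (deriv (deriv φ) x ^ 2 - c ^ 2 * deriv φ x ^ 2 + φ x ^ 2)) / (1 - c ^ 2 / 2) := by
  have := one_sub_sq_div_two_mul_le_integral hφ hφ' h0 h1 h2 c
  have : 0 ≤ ∫ x, deriv (deriv φ) x ^ 2 := integral_nonneg fun x => sq_nonneg _
  rw [le_div_iff₀ (by linarith)]
  nlinarith

theorem sq_le_mul_integral_of_sq_lt_two {c : ℝ} (hc : c ^ 2 < 2) (x : ℝ) :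
    φ x ^ 2 ≤ 3 / (2 * (1 - c ^ 2 / 2)) *
      ∫ x, (deriv (deriv φ) x ^ 2 - c ^ 2 * deriv φ x ^ 2 + φ x ^ 2) := by
  have hδ : 0 < 1 - c ^ 2 / 2 := by linarith
  calc φ x ^ 2 ≤ 3 / 2 * ((∫ x, deriv (deriv φ) x ^ 2) + ∫ x, φ x ^ 2) :=
        sq_le_three_div_two_mul_integral hφ hφ' h0 h1 h2 x
    _ = 3 / (2 * (1 - c ^ 2 / 2)) *
          ((1 - c ^ 2 / 2) * ((∫ x, deriv (deriv φ) x ^ 2) + ∫ x, φ x ^ 2)) := by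
        field_simp [show (2 : ℝ) - c ^ 2 ≠ 0 by linarith]
    _ ≤ _ := by gcongr; exact one_sub_sq_div_two_mul_le_integral hφ hφ' h0 h1 h2 c

end SecondOrderSobolev

theorem stmt_9_general (c : ℝ) (hc0 : 0 < c) (hc : c < Real.sqrt 2)
    (N : ℕ) (a : ℕ → ℝ) (ha : ∀ k, 0 ≤ a k)
    (G : ℝ → ℝ) (hG : ∀ r, G r = ∑ k ∈ Finset.Icc 1 N, a k / (k + 1) * r ^ (k + 1))
    (H2 : (ℝ → ℝ) → Prop)
    (hH2 : ∀ φ, H2 φ ↔ ContDiff ℝ 2 φ ∧ Integrable (fun x => (φ x) ^ 2) ∧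
      Integrable (fun x => (deriv φ x) ^ 2) ∧
      Integrable (fun x => (deriv (deriv φ) x) ^ 2))
    (L I : (ℝ → ℝ) → ℝ)
    (hL : ∀ φ, L φ = ∫ x : ℝ,
      ((deriv (deriv φ) x) ^ 2 - c ^ 2 * (deriv φ x) ^ 2 + (φ x) ^ 2))
    (hI : ∀ φ, I φ = ∫ x : ℝ, G ((φ x) ^ 2))
    (M : ℝ → ℝ) (hM : ∀ lam, M lam = sSup (I '' {φ | H2 φ ∧ L φ = lam})) :
    ∃ C > 0, ∀ lam > 0, M lam ≤ C * G lam := by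
  have hb : ∀ k ∈ Icc 1 N, 0 ≤ a k / (k + 1) := fun k _ => by have := ha k; positivity
  have hc2 : c ^ 2 < 2 := (Real.lt_sqrt hc0.le).1 hc
  have hδ : 0 < 1 - c ^ 2 / 2 := by linarith
  have hK : 1 ≤ 3 / (2 * (1 - c ^ 2 / 2)) := by
    rw [le_div_iff₀ (by positivity)]; nlinarith [sq_nonneg c]
  set δ := 1 - c ^ 2 / 2
  set K := 3 / (2 * δ)
  refine ⟨K ^ N / δ, by positivity, fun lam hlam => ?_⟩
  have hGlam : 0 ≤ G lam := hG lam ▸ sum_nonneg fun k hk => mul_nonneg (hb k hk) (by positivity)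
  rw [hM]
  refine Real.sSup_le ?_ (by positivity)
  rintro _ ⟨φ, ⟨hH2φ, hLφ⟩, rfl⟩
  obtain ⟨hφ, h0, h1, h2⟩ := (hH2 φ).1 hH2φ
  have hφ1 : Differentiable ℝ φ := hφ.differentiable two_ne_zero
  have hφ2 : Differentiable ℝ (deriv φ) := hφ.differentiable_deriv_two
  have hD := integral_sq_le_div_of_sq_lt_two hφ1 hφ2 h0 h1 h2 hc2
  have hsup := sq_le_mul_integral_of_sq_lt_two hφ1 hφ2 h0 h1 h2 hc2
  rw [← hL, hLφ] at hD hsup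
  calc I φ = ∫ x, ∑ k ∈ Icc 1 N, a k / (k + 1) * (φ x ^ 2) ^ (k + 1) := by simp only [hI, hG]
    _ ≤ K ^ N / lam * (∫ x, φ x ^ 2) * G lam := by
        rw [hG]
        exact integral_sum_mul_pow_succ_le hb (fun k hk => (mem_Icc.1 hk).2)
          (fun x => sq_nonneg _) h0 hK hlam hsup
    _ ≤ K ^ N / lam * (lam / δ) * G lam := by gcongr
    _ = K ^ N / δ * G lam := by field_simp

/-- Finiteness of `M_λ = sup { I[φ] : φ ∈ H²(ℝ), L[φ] = λ }` for `0 < c < √2`: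
    in fact `M_λ ≤ C G(λ)` for a constant `C` depending only on `c` and the
    coefficients of the polynomial nonlinearity. -/
theorem stmt_9 (c : ℝ) (hc0 : 0 < c) (hc : c < Real.sqrt 2)
    (N : ℕ) (hN : 1 ≤ N) (a : ℕ → ℝ) (ha : ∀ k, 0 ≤ a k)
    (G : ℝ → ℝ) (hG : ∀ r, G r = ∑ k ∈ Finset.Icc 1 N, a k / (k + 1) * r ^ (k + 1))
    (H2 : (ℝ → ℝ) → Prop)
    (hH2 : ∀ φ, H2 φ ↔ ContDiff ℝ 2 φ ∧ Integrable (fun x => (φ x) ^ 2) ∧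
      Integrable (fun x => (deriv φ x) ^ 2) ∧
      Integrable (fun x => (deriv (deriv φ) x) ^ 2))
    (L I : (ℝ → ℝ) → ℝ)
    (hL : ∀ φ, L φ = ∫ x : ℝ,
      ((deriv (deriv φ) x) ^ 2 - c ^ 2 * (deriv φ x) ^ 2 + (φ x) ^ 2))
    (hI : ∀ φ, I φ = ∫ x : ℝ, G ((φ x) ^ 2))
    (M : ℝ → ℝ) (hM : ∀ lam, M lam = sSup (I '' {φ | H2 φ ∧ L φ = lam})) :
    ∃ C > 0, ∀ lam > 0, M lam ≤ C * G lam :=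
  stmt_9_general c hc0 hc N a ha G hG H2 hH2 L I hL hI M hM
end

section
/- Let 0 < c < √2, δ = √(2-c²)/2, and suppose φ : ℝ → ℝ is bounded, continuous, and satisfies φ = K * (φ³) pointwise, where |K(x)| ≤ C e^{-δ|x|}. If |φ(x)| ≤ C₁ e^{-δ₁|x|} for some δ₁ with 0 < 3δ₁ < δ, then |φ(x)| ≤ C₂ e^{-3δ₁|x|} for some constant C₂. -/
/-!
Bound the cube by `|φ y|³ ≤ C₁³ e^{-3δ₁|y|}` and feed it into the fixed-point equation. The
triangle inequality `|x| ≤ |x - y| + |y|` moves a factor `e^{-3δ₁|x|}` out of the kernel: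
`e^{-δ|x-y|} e^{-3δ₁|y|} ≤ e^{-3δ₁|x|} e^{-(δ-3δ₁)|x-y|}`, and since `3δ₁ < δ` the remaining
factor integrates in `y` to `2/(δ-3δ₁)`.
-/

open MeasureTheory Real

theorem integral_exp_neg_mul_abs {m : ℝ} (hm : 0 < m) : ∫ t, exp (-m * |t|) = 2 / m := by
  rw [integral_comp_abs (f := fun t => exp (-m * t)), integral_exp_mul_Ioi (by linarith)]
  field_simp
  simp

theorem integrable_exp_neg_mul_abs {m : ℝ} (hm : 0 < m) : Integrable fun t => exp (-m * |t|) :=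
  Integrable.of_integral_ne_zero (by rw [integral_exp_neg_mul_abs hm]; positivity)

theorem exp_neg_mul_abs_sub_mul_exp_neg_mul_abs_le {a : ℝ} (ha : 0 ≤ a) (b x y : ℝ) :
    exp (-b * |x - y|) * exp (-a * |y|) ≤ exp (-a * |x|) * exp (-(b - a) * |x - y|) := by
  have htri : |x| - |y| ≤ |x - y| := abs_sub_abs_le_abs_sub x y
  rw [← exp_add, ← exp_add, exp_le_exp]
  nlinarith

theorem integrable_exp_neg_mul_abs_mul_exp_neg_mul_abs_sub {a b : ℝ} (hab : a < b) (x : ℝ) :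
    Integrable fun y => exp (-a * |x|) * exp (-(b - a) * |x - y|) :=
  ((integrable_exp_neg_mul_abs (sub_pos.2 hab)).comp_sub_left x).const_mul _

theorem integrable_exp_neg_mul_abs_sub_mul_exp_neg_mul_abs {a b : ℝ} (ha : 0 ≤ a) (hab : a < b)
    (x : ℝ) :
    Integrable fun y => exp (-b * |x - y|) * exp (-a * |y|) :=
  (integrable_exp_neg_mul_abs_mul_exp_neg_mul_abs_sub hab x).mono' (by fun_prop)
    (ae_of_all _ fun y => by
      rw [norm_of_nonneg (by positivity)]
      exact exp_neg_mul_abs_sub_mul_exp_neg_mul_abs_le ha b x y)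

theorem integral_exp_neg_mul_abs_sub_mul_exp_neg_mul_abs_le {a b : ℝ} (ha : 0 ≤ a) (hab : a < b)
    (x : ℝ) :
    ∫ y, exp (-b * |x - y|) * exp (-a * |y|) ≤ 2 / (b - a) * exp (-a * |x|) := by
  calc ∫ y, exp (-b * |x - y|) * exp (-a * |y|)
      ≤ ∫ y, exp (-a * |x|) * exp (-(b - a) * |x - y|) :=
        integral_mono (integrable_exp_neg_mul_abs_sub_mul_exp_neg_mul_abs ha hab x)
          (integrable_exp_neg_mul_abs_mul_exp_neg_mul_abs_sub hab x)
          (exp_neg_mul_abs_sub_mul_exp_neg_mul_abs_le ha b x)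
    _ = 2 / (b - a) * exp (-a * |x|) := by
        rw [integral_const_mul, integral_sub_left_eq_self (fun t => exp (-(b - a) * |t|)),
          integral_exp_neg_mul_abs (sub_pos.2 hab), mul_comm]

theorem abs_integral_mul_le_of_exp_decay {K f : ℝ → ℝ} {a b C A : ℝ} (ha : 0 ≤ a) (hab : a < b)
    (hK : ∀ z, |K z| ≤ C * exp (-b * |z|)) (hf : ∀ y, |f y| ≤ A * exp (-a * |y|)) (x : ℝ) :
    |∫ y, K (x - y) * f y| ≤ C * A * (2 / (b - a)) * exp (-a * |x|) := by
  have hC : 0 ≤ C := nonneg_of_mul_nonneg_left ((abs_nonneg _).trans (hK 0)) (exp_pos _)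
  have hA : 0 ≤ A := nonneg_of_mul_nonneg_left ((abs_nonneg _).trans (hf 0)) (exp_pos _)
  have hpointwise (y : ℝ) :
      ‖K (x - y) * f y‖ ≤ C * A * (exp (-b * |x - y|) * exp (-a * |y|)) := by
    rw [norm_mul, norm_eq_abs, norm_eq_abs, mul_mul_mul_comm]
    exact mul_le_mul (hK _) (hf _) (abs_nonneg _) (by positivity)
  calc |∫ y, K (x - y) * f y|
      ≤ ∫ y, C * A * (exp (-b * |x - y|) * exp (-a * |y|)) :=
        norm_integral_le_of_norm_le
          ((integrable_exp_neg_mul_abs_sub_mul_exp_neg_mul_abs ha hab x).const_mul _)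
          (ae_of_all _ hpointwise)
    _ ≤ C * A * (2 / (b - a) * exp (-a * |x|)) := by
        rw [integral_const_mul]
        gcongr
        exact integral_exp_neg_mul_abs_sub_mul_exp_neg_mul_abs_le ha hab x
    _ = C * A * (2 / (b - a)) * exp (-a * |x|) := by ring

theorem stmt_16_general
    (δ : ℝ)
    (K φ : ℝ → ℝ)
    (C : ℝ) (hC : 0 < C) (hK : ∀ x, |K x| ≤ C * Real.exp (-δ * |x|))
    (hfix : ∀ x, φ x = ∫ y : ℝ, K (x - y) * (φ y) ^ 3)
    (δ₁ : ℝ) (hδ₁ : 0 < δ₁) (hδ₁δ : 3 * δ₁ < δ)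
    (C₁ : ℝ) (hC₁ : 0 < C₁) (hφ : ∀ x, |φ x| ≤ C₁ * Real.exp (-δ₁ * |x|)) :
    ∃ C₂ > 0, ∀ x : ℝ, |φ x| ≤ C₂ * Real.exp (-(3 * δ₁) * |x|) := by
  have hgap : 0 < δ - 3 * δ₁ := by linarith
  have hcube (y : ℝ) : |φ y ^ 3| ≤ C₁ ^ 3 * exp (-(3 * δ₁) * |y|) := by
    calc |φ y ^ 3| = |φ y| ^ 3 := abs_pow _ _
      _ ≤ (C₁ * exp (-δ₁ * |y|)) ^ 3 := pow_le_pow_left₀ (abs_nonneg _) (hφ y) 3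
      _ = C₁ ^ 3 * exp (-(3 * δ₁) * |y|) := by rw [mul_pow, ← exp_nat_mul]; ring_nf
  refine ⟨C * C₁ ^ 3 * (2 / (δ - 3 * δ₁)), by positivity, fun x => ?_⟩
  rw [hfix x]
  exact abs_integral_mul_le_of_exp_decay (by positivity) hδ₁δ hK hcube x

/-- Decay bootstrap: if `φ` is bounded and continuous, solves the convolution
    fixed-point equation `φ = K * φ³` with `|K(x)| ≤ C e^{-δ|x|}`, `δ = √(2-c²)/2`,
    and `|φ(x)| ≤ C₁ e^{-δ₁|x|}` with `0 < 3δ₁ < δ`, then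
    `|φ(x)| ≤ C₂ e^{-3δ₁|x|}` for some constant `C₂`. -/
theorem stmt_16 (c : ℝ) (hc0 : 0 < c) (hc : c < Real.sqrt 2)
    (δ : ℝ) (hδ : δ = Real.sqrt (2 - c ^ 2) / 2)
    (K φ : ℝ → ℝ) (hKmeas : Measurable K)
    (C : ℝ) (hC : 0 < C) (hK : ∀ x, |K x| ≤ C * Real.exp (-δ * |x|))
    (hφb : ∃ B, ∀ x, |φ x| ≤ B) (hφc : Continuous φ)
    (hfix : ∀ x, φ x = ∫ y : ℝ, K (x - y) * (φ y) ^ 3)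
    (δ₁ : ℝ) (hδ₁ : 0 < δ₁) (hδ₁δ : 3 * δ₁ < δ)
    (C₁ : ℝ) (hC₁ : 0 < C₁) (hφ : ∀ x, |φ x| ≤ C₁ * Real.exp (-δ₁ * |x|)) :
    ∃ C₂ > 0, ∀ x : ℝ, |φ x| ≤ C₂ * Real.exp (-(3 * δ₁) * |x|) :=
  stmt_16_general δ K φ C hC hK hfix δ₁ hδ₁ hδ₁δ C₁ hC₁ hφ
end
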